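/- Let f_i : ℝ^{n×p} → ℝ (i = 1,…,d) be continuously differentiable functions, and let g_i : ℝ^{n×p} → ℝ (i = 1,…,d) be convex functions that are Lipschitz continuous with constants L_{g_i}, and set L_g = max_i L_{g_i} > 0. Fix ε > 0 and a smoothing parameter σ with 0 < σ ≤ ε/(2·L_g). Suppose X ∈ ℝ^{n×p} satisfies ‖proj_X(G(X))‖_F ≤ ε and ‖XᵀX − I_p‖_F ≤ ε, where G(X) = Σ_{i=1}^d (∇f_i(X) + ∇env_{σ,g_i}(X)). Then X is a first-order ε-stationary point of the problem min_{XᵀX = I_p} Σ_{i=1}^d (f_i(X) + g_i(X)); namely, taking Y_i = prox_{σ,g_i}(X), there exist subgradients G_i ∈ ∂g_i(Y_i) such that ‖proj_X( Σ_{i=1}^d (∇f_i(X) + G_i) )‖_F ≤ ε, ‖X − Y_i‖_F ≤ ε for all i, and ‖XᵀX − I_p‖_F ≤ ε. -/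
import Mathlib

open Matrix

attribute [local instance]
  Matrix.frobeniusSeminormedAddCommGroup
  Matrix.frobeniusNormedAddCommGroup
  Matrix.frobeniusNormedSpace

/-- `sym(B) = (B + Bᵀ)/2`. -/
noncomputable def msym {p : ℕ} (B : Matrix (Fin p) (Fin p) ℝ) : Matrix (Fin p) (Fin p) ℝ :=
  (1 / 2 : ℝ) • (B + Bᵀ)

/-- `proj_X(Y) = Y − X·sym(XᵀY)`, the projection onto the tangent space of the Stiefel
manifold at `X`. -/
noncomputable def mproj {n p : ℕ} (X Y : Matrix (Fin n) (Fin p) ℝ) :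
    Matrix (Fin n) (Fin p) ℝ :=
  Y - X * msym (Xᵀ * Y)

/-- The linear functional `H ↦ tr(Gᵀ H) = ⟨G, H⟩` (Frobenius inner product with `G`). -/
noncomputable def traceForm {n p : ℕ} (G : Matrix (Fin n) (Fin p) ℝ) :
    Matrix (Fin n) (Fin p) ℝ →ₗ[ℝ] ℝ where
  toFun H := (Gᵀ * H).trace
  map_add' Y Z := by simp [Matrix.mul_add]
  map_smul' c Y := by simp [Matrix.mul_smul]

lemma norm_sq_eq_trace {n p : ℕ} (A : Matrix (Fin n) (Fin p) ℝ) :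
    ‖A‖ ^ 2 = (Aᵀ * A).trace := by
  have h := Matrix.frobenius_norm_def A
  have h2 : ‖A‖ ^ 2 = ∑ i, ∑ j, ‖A i j‖ ^ (2:ℝ) := by
    rw [h, ← Real.rpow_natCast _ 2, ← Real.rpow_mul (by positivity)]
    norm_num
  rw [h2]
  simp only [Matrix.trace, Matrix.diag, Matrix.mul_apply, Matrix.transpose_apply]
  rw [Finset.sum_comm]
  congr 1; ext i; congr 1; ext j
  rw [Real.rpow_two, Real.norm_eq_abs, sq_abs, sq]

lemma trace_expand {n p : ℕ} (A B : Matrix (Fin n) (Fin p) ℝ) (t : ℝ) :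
    ((A + t • B)ᵀ * (A + t • B)).trace
      = (Aᵀ*A).trace + 2*t*(Aᵀ*B).trace + t^2*(Bᵀ*B).trace := by
  have hsym : (Bᵀ*A).trace = (Aᵀ*B).trace := by
    rw [← Matrix.trace_transpose (Bᵀ*A)]; simp [Matrix.transpose_mul]
  simp [Matrix.transpose_add, Matrix.transpose_smul, Matrix.add_mul, Matrix.mul_add,
    Matrix.smul_mul, Matrix.mul_smul, Matrix.trace_add, Matrix.trace_smul, hsym]
  ring

/-- Lemma 1 of the paper.  Let `f i` be continuously differentiable with
gradients `f' i`, let `g i` be convex and `Lg i`-Lipschitz, `Lg i ≤ LG` with `LG > 0`, and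
let `0 < σ ≤ ε/(2·LG)`.  If `X` is a first-order `ε`-stationary point of the smoothed
problem, i.e. `‖proj_X(G(X))‖_F ≤ ε` with
`G(X) = ∑ i (∇f_i(X) + (1/σ)(X − prox_{σ,g_i}(X)))` and `‖XᵀX − I‖_F ≤ ε`, then `X` is a
first-order `ε`-stationary point of the original problem: with `Y i = prox_{σ,g_i}(X)` there
are subgradients `G i ∈ ∂g_i(Y i)` with `‖proj_X(∑ i (∇f_i(X) + G i))‖_F ≤ ε`,
`‖X − Y i‖_F ≤ ε` for all `i`, and `‖XᵀX − I‖_F ≤ ε`. -/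
theorem smoothed_stationary_implies_stationary {n p d : ℕ}
    (f : Fin d → Matrix (Fin n) (Fin p) ℝ → ℝ)
    (f' : Fin d → Matrix (Fin n) (Fin p) ℝ → Matrix (Fin n) (Fin p) ℝ)
    (hf : ∀ i (X₀ : Matrix (Fin n) (Fin p) ℝ),
      HasFDerivAt (f i) (LinearMap.toContinuousLinearMap (traceForm (f' i X₀))) X₀)
    (hf' : ∀ i, Continuous (f' i))
    (g : Fin d → Matrix (Fin n) (Fin p) ℝ → ℝ) (Lg : Fin d → ℝ) (LG : ℝ)
    (hgconv : ∀ i, ConvexOn ℝ Set.univ (g i))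
    (hglip : ∀ i (X Y : Matrix (Fin n) (Fin p) ℝ), |g i X - g i Y| ≤ Lg i * ‖X - Y‖)
    (hLG : ∀ i, Lg i ≤ LG) (hLGpos : 0 < LG)
    (ε σ : ℝ) (hε : 0 < ε) (hσ : 0 < σ) (hσε : σ ≤ ε / (2 * LG))
    (prox : Fin d → Matrix (Fin n) (Fin p) ℝ → Matrix (Fin n) (Fin p) ℝ)
    (hprox : ∀ i (X Z : Matrix (Fin n) (Fin p) ℝ),
      g i (prox i X) + 1 / (2 * σ) * ‖prox i X - X‖ ^ 2
        ≤ g i Z + 1 / (2 * σ) * ‖Z - X‖ ^ 2)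
    (X : Matrix (Fin n) (Fin p) ℝ)
    (hstat : ‖mproj X (∑ i, (f' i X + σ⁻¹ • (X - prox i X)))‖ ≤ ε)
    (hfeas : ‖Xᵀ * X - 1‖ ≤ ε) :
    ∃ G : Fin d → Matrix (Fin n) (Fin p) ℝ,
      (∀ i, ∀ Z : Matrix (Fin n) (Fin p) ℝ,
        g i (prox i X) + ((G i)ᵀ * (Z - prox i X)).trace ≤ g i Z) ∧
      ‖mproj X (∑ i, (f' i X + G i))‖ ≤ ε ∧
      (∀ i, ‖X - prox i X‖ ≤ ε) ∧
      ‖Xᵀ * X - 1‖ ≤ ε := by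
  have h2σLG : 2 * σ * LG ≤ ε := by
    rw [le_div_iff₀ (by positivity)] at hσε; linarith
  refine ⟨fun i => σ⁻¹ • (X - prox i X), ?_, hstat, ?_, hfeas⟩
  · -- subgradient inequality
    intro i Z
    set Y := prox i X with hY
    have htr : ((σ⁻¹ • (X - Y))ᵀ * (Z - Y)).trace
        = σ⁻¹ * ((X - Y)ᵀ * (Z - Y)).trace := by
      rw [Matrix.transpose_smul, Matrix.smul_mul, Matrix.trace_smul, smul_eq_mul]
    rw [htr]
    set q : ℝ := ((Y - X)ᵀ * (Z - Y)).trace with hq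
    have hqq : ((X - Y)ᵀ * (Z - Y)).trace = -q := by
      rw [hq, ← Matrix.trace_neg, ← Matrix.neg_mul, ← Matrix.transpose_neg, neg_sub]
    rw [hqq]
    have hσ2 : σ⁻¹ = 2 * (1 / (2 * σ)) := by
      rw [one_div, mul_inv]; ring
    rw [hσ2]
    set s : ℝ := ‖Z - Y‖ ^ 2 with hs
    have key : ∀ t : ℝ, 0 < t → t ≤ 1 →
        g i Y + 2 * (1 / (2 * σ)) * (-q) ≤ g i Z + (1 / (2 * σ)) * t * s := by
      intro t ht ht1
      have hZt : (Y + t • (Z - Y)) - X = (Y - X) + t • (Z - Y) := by abel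
      have hnorm : ‖(Y + t • (Z - Y)) - X‖ ^ 2
          = ‖Y - X‖ ^ 2 + 2 * t * q + t ^ 2 * s := by
        rw [norm_sq_eq_trace, hZt, trace_expand, ← norm_sq_eq_trace, hs,
          norm_sq_eq_trace (Z - Y), hq]
      have hconv : g i (Y + t • (Z - Y)) ≤ (1 - t) * g i Y + t * g i Z := by
        have := (hgconv i).2 (Set.mem_univ Y) (Set.mem_univ Z)
          (by linarith : (0:ℝ) ≤ 1 - t) (le_of_lt ht) (by ring)
        have heq : (1 - t) • Y + t • Z = Y + t • (Z - Y) := by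
          rw [sub_smul, one_smul, smul_sub]; abel
        rwa [heq] at this
      have hp := hprox i X (Y + t • (Z - Y))
      rw [hnorm] at hp
      have h1 : g i Y ≤ (1 - t) * g i Y + t * g i Z
          + (1 / (2 * σ)) * (2 * t * q + t ^ 2 * s) := by nlinarith [hp, hconv]
      have h2 : t * (g i Y + 2 * (1 / (2 * σ)) * (-q))
          ≤ t * (g i Z + (1 / (2 * σ)) * t * s) := by nlinarith [h1]
      exact le_of_mul_le_mul_left h2 ht
    have hsnn : 0 ≤ s := by rw [hs]; positivity
    have hcnn : (0:ℝ) ≤ 1 / (2 * σ) := by positivity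
    refine le_of_forall_pos_le_add ?_
    intro δ hδ
    have hden : (0:ℝ) < (1 / (2 * σ)) * s + 1 := by positivity
    set t : ℝ := min 1 (δ / ((1 / (2 * σ)) * s + 1)) with htdef
    have ht0 : 0 < t := lt_min one_pos (by positivity)
    have ht1 : t ≤ 1 := min_le_left _ _
    have h3 : t ≤ δ / ((1 / (2 * σ)) * s + 1) := min_le_right _ _
    have h4 : t * ((1 / (2 * σ)) * s + 1) ≤ δ := by
      have := mul_le_mul_of_nonneg_right h3 hden.le
      rwa [div_mul_cancel₀ _ (ne_of_gt hden)] at this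
    have htle : (1 / (2 * σ)) * t * s ≤ δ := by nlinarith [h4, ht0]
    linarith [key t ht0 ht1]
  · -- distance bound
    intro i
    have hp := hprox i X X
    rw [sub_self, norm_zero] at hp
    set r : ℝ := ‖prox i X - X‖ with hr
    clear_value r
    have hrnn : 0 ≤ r := hr ▸ norm_nonneg _
    have hlip := hglip i X (prox i X)
    have habs : g i X - g i (prox i X) ≤ Lg i * ‖X - prox i X‖ :=
      le_trans (le_abs_self _) hlip
    have hrev : ‖X - prox i X‖ = r := by rw [hr, norm_sub_rev]
    rw [hrev] at habs
    have hLgr : Lg i * r ≤ LG * r := mul_le_mul_of_nonneg_right (hLG i) hrnn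
    have hkey : (1 / (2 * σ)) * r ^ 2 ≤ LG * r := by nlinarith [hp, habs, hLgr]
    have hinv2 : 2 * σ * (1 / (2 * σ) * r ^ 2) = r ^ 2 := by
      field_simp
    have hsq : r ^ 2 ≤ 2 * σ * LG * r := by
      have hmul := mul_le_mul_of_nonneg_left hkey (by positivity : (0:ℝ) ≤ 2 * σ)
      rw [hinv2] at hmul
      linarith [hmul]
    rw [hrev]
    rcases eq_or_lt_of_le hrnn with h0 | h0
    · linarith
    · rw [pow_two] at hsq
      have h5 : r ≤ 2 * σ * LG := le_of_mul_le_mul_right hsq h0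
      linarith
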